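/- Let a, b, c be the generators of IMG(z²+i) acting on the binary rooted tree. The subgroup generated by a and c is isomorphic to the dihedral group D₄ of order 8. -/
import Mathlib


/-- The generator `a = (1,1)σ` of `IMG(z²+i)`, acting on the binary rooted tree
whose vertices are finite binary words. -/
def aF : List Bool → List Bool
  | [] => []
  | x :: s => (!x) :: s

mutual
/-- The generator `b = (a, c)` of `IMG(z²+i)`. -/
def bF : List Bool → List Bool
  | [] => []
  | false :: s => false :: aF s
  | true :: s => true :: cF s
/-- The generator `c = (b, 1)` of `IMG(z²+i)`. -/
def cF : List Bool → List Bool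
  | [] => []
  | false :: s => false :: bF s
  | true :: s => true :: s
end

theorem aF_invol : ∀ s, aF (aF s) = s := by
  intro s; cases s <;> simp [aF]

theorem bcF_invol : ∀ s, bF (bF s) = s ∧ cF (cF s) = s := by
  intro s
  induction s with
  | nil => exact ⟨rfl, rfl⟩
  | cons x s ih =>
    cases x <;> exact ⟨by simp [bF, ih.1, ih.2, aF_invol], by simp [cF, ih.1]⟩

/-- `a` as a tree automorphism. -/
def aE : Equiv.Perm (List Bool) := ⟨aF, aF, aF_invol, aF_invol⟩
/-- `b` as a tree automorphism. -/
def bE : Equiv.Perm (List Bool) := ⟨bF, bF, fun s => (bcF_invol s).1, fun s => (bcF_invol s).1⟩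
/-- `c` as a tree automorphism. -/
def cE : Equiv.Perm (List Bool) := ⟨cF, cF, fun s => (bcF_invol s).2, fun s => (bcF_invol s).2⟩

/-- the rotation `g = a * c` -/
def gE : Equiv.Perm (List Bool) := aE * cE

theorem gE_apply (s : List Bool) : gE s = aF (cF s) := rfl

theorem gE_sq (s : List Bool) : gE (gE s) = (match s with
  | [] => []
  | x :: t => x :: bF t) := by
  cases s with
  | nil => rfl
  | cons x t => cases x <;> simp [gE_apply, cF, aF, bF]

theorem gE_pow4 : gE ^ 4 = 1 := by
  apply Equiv.ext; intro s
  show gE (gE (gE (gE s))) = s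
  rw [gE_sq]
  cases s with
  | nil => rfl
  | cons x t => rw [gE_sq]; simp [(bcF_invol t).1]

theorem cE_invol : cE * cE = 1 := by
  apply Equiv.ext; intro s; exact (bcF_invol s).2

theorem aE_invol' : aE * aE = 1 := by
  apply Equiv.ext; intro s; exact aF_invol s

theorem aE_inv : aE⁻¹ = aE := inv_eq_of_mul_eq_one_right aE_invol'
theorem cE_inv : cE⁻¹ = cE := inv_eq_of_mul_eq_one_right cE_invol

theorem conj_g (k : ℕ) : cE * gE ^ k * cE = gE⁻¹ ^ k := by
  induction k with
  | zero => simpa using cE_invol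
  | succ n ih =>
    have key : cE * gE * cE = gE⁻¹ := by
      have : gE⁻¹ = cE * aE := by rw [gE, mul_inv_rev, aE_inv, cE_inv]
      rw [this, gE,
        show cE * (aE * cE) * cE = cE * aE * (cE * cE) by group, cE_invol, mul_one]
    calc cE * gE ^ (n+1) * cE = (cE * gE ^ n * cE) * (cE * gE * cE) := by
          rw [pow_succ]
          rw [show (cE * gE ^ n * cE) * (cE * gE * cE) = cE * gE ^ n * (cE * cE) * gE * cE by group, cE_invol]
          group
      _ = gE⁻¹ ^ (n+1) := by rw [ih, key, pow_succ]

theorem gE_inv : gE⁻¹ = gE ^ 3 := by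
  rw [eq_comm, eq_inv_iff_mul_eq_one, ← pow_succ]
  exact gE_pow4

theorem val_lemma : ∀ i j : ZMod 4, (3 * i.val + j.val) % 4 = (j - i).val := by decide

theorem pow_eq_of_mod {m n : ℕ} (h : m % 4 = n % 4) : gE ^ m = gE ^ n := by
  rw [pow_eq_pow_mod m gE_pow4, pow_eq_pow_mod n gE_pow4, h]

/-- the homomorphism from the dihedral group -/
def φ : DihedralGroup 4 →* Equiv.Perm (List Bool) :=
  MonoidHom.mk' (fun x => match x with
    | .r i => gE ^ i.val
    | .sr i => cE * gE ^ i.val) (by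
    rintro (i | i) (j | j) <;>
      simp only [DihedralGroup.r_mul_r, DihedralGroup.r_mul_sr,
        DihedralGroup.sr_mul_r, DihedralGroup.sr_mul_sr]
    · rw [← pow_add]
      apply pow_eq_of_mod; rw [ZMod.val_add]; omega
    · -- g^i * (c * g^j) = c * g^(j-i)
      have h1 : gE ^ i.val * cE = cE * gE⁻¹ ^ i.val := by
        rw [← conj_g]
        rw [show cE * (cE * gE ^ i.val * cE) = (cE * cE) * gE ^ i.val * cE by group, cE_invol]
        group
      rw [show gE ^ i.val * (cE * gE ^ j.val) = (gE ^ i.val * cE) * gE ^ j.val by group, h1,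
        gE_inv, ← pow_mul, mul_assoc, ← pow_add]
      congr 1
      apply pow_eq_of_mod
      have := ZMod.val_lt (j - i)
      have := val_lemma i j
      omega
    · rw [show cE * gE ^ i.val * gE ^ j.val = cE * (gE ^ i.val * gE ^ j.val) by group, ← pow_add]
      congr 1
      apply pow_eq_of_mod; rw [ZMod.val_add]; omega
    · rw [show cE * gE ^ i.val * (cE * gE ^ j.val) = (cE * gE ^ i.val * cE) * gE ^ j.val by group,
        conj_g, gE_inv, ← pow_mul, ← pow_add]
      apply pow_eq_of_mod
      have := ZMod.val_lt (j - i)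
      have := val_lemma i j
      omega)

theorem φ_inj : Function.Injective φ := by
  rw [injective_iff_map_eq_one]
  rintro (i | i) h
  · fin_cases i
    · rfl
    · exact absurd (Equiv.ext_iff.mp h [false]) (by decide)
    · exact absurd (Equiv.ext_iff.mp h [false, false, false]) (by decide)
    · exact absurd (Equiv.ext_iff.mp h [false]) (by decide)
  · fin_cases i
    · exact absurd (Equiv.ext_iff.mp h [false, false, false]) (by decide)
    · exact absurd (Equiv.ext_iff.mp h [true, false, false]) (by decide)
    · exact absurd (Equiv.ext_iff.mp h [true, false, false]) (by decide)
    · exact absurd (Equiv.ext_iff.mp h [false]) (by decide)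

theorem φ_range : φ.range = Subgroup.closure ({aE, cE} : Set (Equiv.Perm (List Bool))) := by
  apply le_antisymm
  · rintro x ⟨(i | i), rfl⟩ <;>
    · have ha : aE ∈ Subgroup.closure ({aE, cE} : Set (Equiv.Perm (List Bool))) :=
        Subgroup.subset_closure (by simp)
      have hc : cE ∈ Subgroup.closure ({aE, cE} : Set (Equiv.Perm (List Bool))) :=
        Subgroup.subset_closure (by simp)
      have hg : gE ∈ Subgroup.closure ({aE, cE} : Set (Equiv.Perm (List Bool))) :=
        mul_mem ha hc
      first
        | exact pow_mem hg _
        | exact mul_mem hc (pow_mem hg _)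
  · rw [Subgroup.closure_le]
    rintro x (rfl | rfl)
    · refine ⟨.sr 3, ?_⟩
      show cE * gE ^ (3 : ZMod 4).val = aE
      have : (3 : ZMod 4).val = 3 := rfl
      rw [this, ← gE_inv, gE, mul_inv_rev, aE_inv, cE_inv,
        show cE * (cE * aE) = (cE * cE) * aE by group, cE_invol, one_mul]
    · exact ⟨.sr 0, mul_one cE⟩

/-- The subgroup of `IMG(z²+i)` generated by `a` and `c` is isomorphic to
the dihedral group `D₄` of order 8. -/
theorem stmt_8 :
    Nonempty (↥(Subgroup.closure ({aE, cE} : Set (Equiv.Perm (List Bool)))) ≃* DihedralGroup 4) := by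
  exact ⟨((MulEquiv.subgroupCongr φ_range.symm).trans (MonoidHom.ofInjective φ_inj).symm)⟩
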